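/- arXiv:1505.04128 — 3 statements merged into one kernel-verified Lean document; each statement's English description precedes it below -/
import Mathlib

section
/- Let G = Z/n1 × ... × Z/nk with exactly s of the integers n1,...,nk even, acting trivially on R*. Then H^2(G, R*) is isomorphic to (Z/2)^{s(s+1)/2}; in particular |H^2(G, R*)| = 2^{s(s+1)/2}. -/
/-- The group of (inhomogeneous) 2-cocycles of a group `G` with coefficients in an
abelian group `A` (written multiplicatively), with respect to the trivial action. -/
def cocycles2 (G A : Type*) [Group G] [CommGroup A] : Subgroup (G × G → A) where
  carrier := {C | ∀ a b c : G, C (b, c) * C (a, b * c) = C (a * b, c) * C (a, b)}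
  one_mem' := by intro a b c; simp
  mul_mem' := by
    intro C D hC hD a b c
    simp only [Pi.mul_apply]
    rw [mul_mul_mul_comm, hC a b c, hD a b c, mul_mul_mul_comm]
  inv_mem' := by
    intro C hC a b c
    simp only [Pi.inv_apply]
    rw [← mul_inv, hC a b c, mul_inv]

/-- The group of 2-coboundaries. -/
def coboundaries2 (G A : Type*) [Group G] [CommGroup A] : Subgroup (G × G → A) where
  carrier := {C | ∃ ρ : G → A, ∀ p : G × G, C p = ρ p.1 * ρ p.2 * (ρ (p.1 * p.2))⁻¹}
  one_mem' := ⟨fun _ => 1, by simp⟩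
  mul_mem' := by
    rintro C D ⟨ρ, hρ⟩ ⟨σ, hσ⟩
    refine ⟨fun g => ρ g * σ g, fun p => ?_⟩
    simp only [Pi.mul_apply, hρ p, hσ p, mul_inv]
    simp [mul_assoc, mul_comm, mul_left_comm]
  inv_mem' := by
    rintro C ⟨ρ, hρ⟩
    refine ⟨fun g => (ρ g)⁻¹, fun p => ?_⟩
    simp only [Pi.inv_apply, hρ p, mul_inv, inv_inv]

/-- Second group cohomology of `G` with coefficients in `A`, with trivial `G`-action:
2-cocycles modulo 2-coboundaries. -/
def H2triv (G A : Type*) [Group G] [CommGroup A] :=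
  cocycles2 G A ⧸ ((coboundaries2 G A).subgroupOf (cocycles2 G A))

noncomputable instance (G A : Type*) [Group G] [CommGroup A] : Group (H2triv G A) :=
  QuotientGroup.Quotient.group _


/-!
Two reductions. First, the sign map `ℝˣ → ℤ/2` induces an isomorphism on `H²` of a finite
group: it has a section, and a cocycle with positive values is a coboundary, because its
logarithm is a real cocycle and summing the cocycle identity over the group exhibits `|G|` times
the logarithm as a coboundary.

Second, for `G = ∏ ℤ/nᵢ` with generators `gᵢ` and coefficients in `ℤ/2`, a cocycle `c` has one
invariant for each unordered pair `{i, j}` of indices with `nᵢ, nⱼ` even: for `i = j` the product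
`∏_{t < nᵢ} c(gᵢᵗ, gᵢ)`, which is the `nᵢ`-th power of the lift of `gᵢ` to the extension defined
by `c`, and for `i ≠ j` the commutator `c(gᵢ, gⱼ) / c(gⱼ, gᵢ)` of the lifts. These `s(s+1)/2`
invariants vanish on coboundaries; they are realized independently by the carry cocycle of
`ℤ/nᵢ` and by products of parity characters; and when they all vanish, the commutator form (which
is bimultiplicative and kills the generators of odd order) is trivial, so the extension is
abelian and lifts of the generators of order `nᵢ` define a splitting.
-/

open Multiplicative

section Functoriality

variable {G A B : Type*} [Group G] [CommGroup A] [CommGroup B]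

def mapCocycles2 (f : A →* B) : cocycles2 G A →* cocycles2 G B where
  toFun C := ⟨f ∘ C, fun a b c => by simp only [Function.comp_apply, ← map_mul, C.2 a b c]⟩
  map_one' := Subtype.ext <| funext fun _ => map_one f
  map_mul' C D := Subtype.ext <| funext fun _ => map_mul f _ _

lemma comp_mem_coboundaries2 (f : A →* B) {C : G × G → A} (hC : C ∈ coboundaries2 G A) :
    f ∘ C ∈ coboundaries2 G B := by
  obtain ⟨ρ, hρ⟩ := hC
  exact ⟨f ∘ ρ, fun p => by simp [hρ p]⟩

noncomputable def mapH2 (f : A →* B) : H2triv G A →* H2triv G B :=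
  QuotientGroup.map _ _ (mapCocycles2 f) fun _ hC => comp_mem_coboundaries2 f hC

lemma mapH2_mk (f : A →* B) (C : cocycles2 G A) :
    mapH2 f (QuotientGroup.mk C) = QuotientGroup.mk (mapCocycles2 f C) := rfl

end Functoriality

lemma mem_coboundaries2_of_pos {G : Type*} [Group G] [Fintype G] {C : G × G → ℝˣ}
    (hC : C ∈ cocycles2 G ℝˣ) (hpos : ∀ p, 0 < (C p : ℝ)) : C ∈ coboundaries2 G ℝˣ := by
  set L : G × G → ℝ := fun p => Real.log (C p)
  set S : G → ℝ := fun g => ∑ x, L (g, x)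
  have hN : (0 : ℝ) < Fintype.card G := Nat.cast_pos.mpr Fintype.card_pos
  have hL : ∀ a b c : G, L (b, c) + L (a, b * c) = L (a * b, c) + L (a, b) := fun a b c => by
    simpa [L, Real.log_mul (hpos _).ne' (hpos _).ne'] using congrArg (Real.log ∘ (↑)) (hC a b c)
  have hS : ∀ a b : G, Fintype.card G * L (a, b) = S a + S b - S (a * b) := fun a b => by
    have h := Finset.sum_congr rfl fun c (_ : c ∈ Finset.univ) => hL a b c
    rw [Finset.sum_add_distrib, Finset.sum_add_distrib, Finset.sum_const, Finset.card_univ,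
      nsmul_eq_mul, Fintype.sum_equiv (Equiv.mulLeft b) (fun c => L (a, b * c)) (fun c => L (a, c))
      fun _ => rfl] at h
    linarith
  refine ⟨fun g => Units.mk0 (Real.exp (S g / Fintype.card G)) (Real.exp_pos _).ne',
    fun ⟨a, b⟩ => Units.ext ?_⟩
  simp only [Units.val_mul, Units.val_inv_eq_inv_val, Units.val_mk0, ← Real.exp_add,
    ← Real.exp_neg]
  rw [← Real.exp_log (hpos (a, b))]
  congr 1
  field_simp
  linarith [hS a b]

section ZModLift

def zmodLift {M : Type*} [Group M] {m : ℕ} (w : M) (hw : w ^ m = 1) :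
    Multiplicative (ZMod m) →* M :=
  AddMonoidHom.toMultiplicativeLeft <| ZMod.lift m
    ⟨zmultiplesHom (Additive M) (Additive.ofMul w), by simpa using congrArg Additive.ofMul hw⟩

@[simp]
lemma zmodLift_ofAdd_one {M : Type*} [Group M] {m : ℕ} (w : M) (hw : w ^ m = 1) :
    zmodLift w hw (ofAdd 1) = w := by
  simpa [zmodLift] using congrArg Additive.toMul
    (ZMod.lift_coe m ⟨zmultiplesHom (Additive M) (Additive.ofMul w), _⟩ 1)

lemma ofAdd_one_pow_val {m : ℕ} [NeZero m] (x : Multiplicative (ZMod m)) :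
    ofAdd (1 : ZMod m) ^ (toAdd x).val = x := by
  rw [← ofAdd_nsmul, nsmul_one, ZMod.natCast_zmod_val, ofAdd_toAdd]

lemma zmod_monoidHom_ext {M : Type*} [Monoid M] {m : ℕ} [NeZero m]
    {f g : Multiplicative (ZMod m) →* M} (h : f (ofAdd 1) = g (ofAdd 1)) : f = g :=
  MonoidHom.ext fun x => by rw [← ofAdd_one_pow_val x, map_pow, map_pow, h]

end ZModLift

section RealSign

noncomputable def realSign : ℝˣ →* Multiplicative (ZMod 2) where
  toFun x := if 0 < (x : ℝ) then 1 else ofAdd 1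
  map_one' := by simp
  map_mul' x y := by
    rcases x.ne_zero.lt_or_gt with hx | hx <;> rcases y.ne_zero.lt_or_gt with hy | hy <;>
      simp [mul_pos_iff, hx, hy, hx.not_gt, hy.not_gt, ← ofAdd_add]
    decide

def signUnit : Multiplicative (ZMod 2) →* ℝˣ := zmodLift (-1) (by norm_num)

lemma realSign_comp_signUnit : realSign.comp signUnit = MonoidHom.id _ :=
  zmod_monoidHom_ext <| by simp [signUnit, realSign]

lemma pos_signUnit_realSign_inv_mul (x : ℝˣ) : 0 < (((signUnit (realSign x))⁻¹ * x : ℝˣ) : ℝ) := by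
  rcases x.ne_zero.lt_or_gt with hx | hx <;> simp [realSign, signUnit, hx, hx.not_gt]

noncomputable def h2UnitsRealEquiv (G : Type*) [Group G] [Fintype G] :
    H2triv G ℝˣ ≃* H2triv G (Multiplicative (ZMod 2)) where
  toFun := mapH2 realSign
  invFun := mapH2 signUnit
  left_inv x := QuotientGroup.induction_on x fun C => by
    refine QuotientGroup.eq.mpr (mem_coboundaries2_of_pos ?_ fun p => ?_)
    · exact ((mapCocycles2 signUnit (mapCocycles2 realSign C))⁻¹ * C).2
    · exact pos_signUnit_realSign_inv_mul (C.1 p)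
  right_inv x := QuotientGroup.induction_on x fun C => by
    rw [mapH2_mk, mapH2_mk]
    congr
    exact Subtype.ext <| funext fun p => DFunLike.congr_fun realSign_comp_signUnit (C.1 p)
  map_mul' := map_mul _

end RealSign

section CocycleForms

variable {G A : Type*} [CommGroup A]

def commForm (C : G × G → A) (g h : G) : A := C (g, h) / C (h, g)

lemma commForm_swap (C : G × G → A) (g h : G) : commForm C h g = (commForm C g h)⁻¹ :=
  (inv_div _ _).symm

variable [Group G] {C : G × G → A}

lemma apply_one_left_of_mem_cocycles2 (hC : C ∈ cocycles2 G A) (g : G) : C (1, g) = C (1, 1) := by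
  simpa using hC 1 1 g

lemma apply_one_right_of_mem_cocycles2 (hC : C ∈ cocycles2 G A) (g : G) : C (g, 1) = C (1, 1) := by
  simpa using (hC g 1 1).symm

lemma comp_prodMap_mem_cocycles2 {H : Type*} [Group H] {C : H × H → A}
    (hC : C ∈ cocycles2 H A) (f : G →* H) : C ∘ Prod.map f f ∈ cocycles2 G A := fun a b c => by
  simpa using hC (f a) (f b) (f c)

lemma bilinear_mem_cocycles2 {R : Type*} [CommRing R] (χ ψ : G →* Multiplicative R) :
    (fun p : G × G => ofAdd (toAdd (χ p.1) * toAdd (ψ p.2))) ∈ cocycles2 G (Multiplicative R) :=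
  fun a b c => by simp only [map_mul, toAdd_mul, ← ofAdd_add]; ring_nf

def powProd (C : G × G → A) (g : G) (m : ℕ) : A := ∏ t ∈ Finset.range m, C (g ^ t, g)

lemma powProd_comp_prodMap {H : Type*} [Group H] (C : H × H → A) (f : G →* H) (g : G) (m : ℕ) :
    powProd (C ∘ Prod.map f f) g m = powProd C (f g) m := by
  simp [powProd]

lemma exists_powProd_eq_pow_of_mem_coboundaries2 (hC : C ∈ coboundaries2 G A) {g : G} {m : ℕ}
    (hg : g ^ m = 1) : ∃ a : A, powProd C g m = a ^ m := by
  obtain ⟨ρ, hρ⟩ := hC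
  have hterm : ∀ t, C (g ^ t, g) = ρ g * (ρ (g ^ t) / ρ (g ^ (t + 1))) := fun t => by
    rw [hρ, pow_succ, div_eq_mul_inv]
    dsimp only
    ac_rfl
  refine ⟨ρ g, ?_⟩
  rw [powProd, Finset.prod_congr rfl fun t _ => hterm t, Finset.prod_mul_distrib,
    Finset.prod_range_div', Finset.prod_const, Finset.card_range, hg, pow_zero, div_self', mul_one]

lemma commForm_eq_one_of_mem_coboundaries2 (hC : C ∈ coboundaries2 G A) {g h : G}
    (hgh : Commute g h) : commForm C g h = 1 := by
  obtain ⟨ρ, hρ⟩ := hC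
  rw [commForm, div_eq_one, hρ, hρ, hgh.eq, mul_comm (ρ g)]

def powProdHom (g : G) (m : ℕ) : cocycles2 G A →* A where
  toFun C := powProd C.1 g m
  map_one' := by simp [powProd]
  map_mul' C D := by simp [powProd, Finset.prod_mul_distrib]

@[simp]
lemma powProdHom_apply (g : G) (m : ℕ) (C : cocycles2 G A) : powProdHom g m C = powProd C.1 g m :=
  rfl

def commFormHom (g h : G) : cocycles2 G A →* A where
  toFun C := commForm C.1 g h
  map_one' := by simp [commForm]
  map_mul' C D := by simp [commForm, mul_div_mul_comm]

@[simp]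
lemma commFormHom_apply (g h : G) (C : cocycles2 G A) : commFormHom g h C = commForm C.1 g h :=
  rfl

end CocycleForms

section CommutatorForm

variable {G A : Type*} [CommGroup G] [CommGroup A] {C : G × G → A}

lemma commForm_mul_left (hC : C ∈ cocycles2 G A) (a b d : G) :
    commForm C (a * b) d = commForm C a d * commForm C b d := by
  have h₁ := congrArg Additive.ofMul (hC a b d)
  have h₂ := congrArg Additive.ofMul (hC d a b)
  have h₃ := congrArg Additive.ofMul (hC a d b)
  apply Additive.ofMul.injective
  simp only [commForm, ofMul_mul, ofMul_div, mul_comm d] at *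
  linear_combination (norm := module) h₃ - h₁ - h₂

def commFormHomLeft (hC : C ∈ cocycles2 G A) (d : G) : G →* A where
  toFun g := commForm C g d
  map_one' := by
    rw [commForm, apply_one_left_of_mem_cocycles2 hC, apply_one_right_of_mem_cocycles2 hC d,
      div_self']
  map_mul' a b := commForm_mul_left hC a b d

lemma commFormHomLeft_apply (hC : C ∈ cocycles2 G A) (d g : G) :
    commFormHomLeft hC d g = commForm C g d :=
  rfl

end CommutatorForm

abbrev ZModPi {ι : Type*} (n : ι → ℕ) := ∀ i, Multiplicative (ZMod (n i))

namespace ZModPi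

variable {ι : Type*} (n : ι → ℕ)

section Generators

variable [DecidableEq ι]

def gen (i : ι) : ZModPi n := Pi.mulSingle i (ofAdd 1)

lemma gen_apply_of_ne {i j : ι} (h : j ≠ i) : gen n i j = 1 := Pi.mulSingle_eq_of_ne h _

lemma gen_pow_card (i : ι) : gen n i ^ n i = 1 := by
  rw [gen, ← Pi.mulSingle_pow, ← ofAdd_nsmul, nsmul_one, ZMod.natCast_self, ofAdd_zero,
    Pi.mulSingle_one]

end Generators

variable {n} [Fintype ι] [∀ i, NeZero (n i)]

def lift {M : Type*} [Group M] (w : ι → M) (hw : ∀ i, w i ^ n i = 1)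
    (hcomm : Pairwise fun i j => Commute (w i) (w j)) : ZModPi n →* M :=
  MonoidHom.noncommPiCoprod (fun i => zmodLift (w i) (hw i)) <| hcomm.mono fun i j h x y => by
    rw [← ofAdd_one_pow_val x, ← ofAdd_one_pow_val y, map_pow, map_pow, zmodLift_ofAdd_one,
      zmodLift_ofAdd_one]
    exact h.pow_pow _ _

variable [DecidableEq ι]

@[simp]
lemma lift_gen {M : Type*} [Group M] (w : ι → M) (hw : ∀ i, w i ^ n i = 1)
    (hcomm : Pairwise fun i j => Commute (w i) (w j)) (i : ι) :
    lift w hw hcomm (gen n i) = w i := by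
  rw [lift, gen, MonoidHom.noncommPiCoprod_mulSingle, zmodLift_ofAdd_one]

lemma hom_ext {M : Type*} [CommMonoid M] {f g : ZModPi n →* M}
    (h : ∀ i, f (gen n i) = g (gen n i)) : f = g :=
  MonoidHom.functions_ext' M f g fun i => zmod_monoidHom_ext (h i)

end ZModPi

@[ext]
structure CocycleExt {G A : Type*} [Group G] [CommGroup A] (C : cocycles2 G A) where
  fst : A
  snd : G

namespace CocycleExt

variable {G A : Type*} [Group G] [CommGroup A] {C : cocycles2 G A}

instance : Group (CocycleExt C) where
  mul x y := ⟨x.fst * y.fst * C.1 (x.snd, y.snd), x.snd * y.snd⟩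
  one := ⟨(C.1 (1, 1))⁻¹, 1⟩
  inv x := ⟨(x.fst * C.1 (x.snd⁻¹, x.snd) * C.1 (1, 1))⁻¹, x.snd⁻¹⟩
  mul_assoc x y z := by
    ext
    · have h := C.2 x.snd y.snd z.snd
      show x.fst * y.fst * C.1 (x.snd, y.snd) * z.fst * C.1 (x.snd * y.snd, z.snd)
        = x.fst * (y.fst * z.fst * C.1 (y.snd, z.snd)) * C.1 (x.snd, y.snd * z.snd)
      calc _ = x.fst * y.fst * z.fst * (C.1 (x.snd * y.snd, z.snd) * C.1 (x.snd, y.snd)) := by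
            ac_rfl
        _ = _ := by rw [← h]; ac_rfl
    · exact mul_assoc _ _ _
  one_mul x := by
    ext
    · show (C.1 (1, 1))⁻¹ * x.fst * C.1 (1, x.snd) = x.fst
      rw [apply_one_left_of_mem_cocycles2 C.2 x.snd, mul_right_comm, inv_mul_cancel, one_mul]
    · exact one_mul _
  mul_one x := by
    ext
    · show x.fst * (C.1 (1, 1))⁻¹ * C.1 (x.snd, 1) = x.fst
      rw [apply_one_right_of_mem_cocycles2 C.2 x.snd, inv_mul_cancel_right]
    · exact mul_one _
  inv_mul_cancel x := by
    ext
    · show (x.fst * C.1 (x.snd⁻¹, x.snd) * C.1 (1, 1))⁻¹ * x.fst * C.1 (x.snd⁻¹, x.snd)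
        = (C.1 (1, 1))⁻¹
      rw [mul_inv_rev, mul_inv_rev]
      group
    · exact inv_mul_cancel _

lemma mul_def (x y : CocycleExt C) : x * y = ⟨x.fst * y.fst * C.1 (x.snd, y.snd), x.snd * y.snd⟩ :=
  rfl

lemma one_def : (1 : CocycleExt C) = ⟨(C.1 (1, 1))⁻¹, 1⟩ := rfl

def sndHom : CocycleExt C →* G where
  toFun := snd
  map_one' := rfl
  map_mul' _ _ := rfl

lemma mk_one_pow (g : G) (m : ℕ) :
    (⟨1, g⟩ : CocycleExt C) ^ m = ⟨(C.1 (1, 1))⁻¹ * powProd C.1 g m, g ^ m⟩ := by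
  induction m with
  | zero => simp [powProd, one_def]
  | succ m ih => simp [pow_succ, ih, mul_def, powProd, Finset.prod_range_succ, mul_assoc]

lemma sq_eq_one_of_snd_eq_one (hA : ∀ a : A, a ^ 2 = 1) {x : CocycleExt C} (hx : x.snd = 1) :
    x ^ 2 = 1 := by
  have hx₁ := hA x.fst
  have hC₁ := hA (C.1 (1, 1))
  rw [sq] at hx₁ hC₁ ⊢
  ext
  · show x.fst * x.fst * C.1 (x.snd, x.snd) = (C.1 (1, 1))⁻¹
    rw [hx, hx₁, one_mul, eq_inv_iff_mul_eq_one, hC₁]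
  · show x.snd * x.snd = 1
    rw [hx, mul_one]

lemma commute_mk_one (hC : ∀ g h, C.1 (g, h) = C.1 (h, g)) {g h : G} (hgh : Commute g h) :
    Commute (⟨1, g⟩ : CocycleExt C) ⟨1, h⟩ := by
  simp [Commute, SemiconjBy, mul_def, hC g h, hgh.eq]

end CocycleExt

lemma mem_coboundaries2_of_section {G A : Type*} [Group G] [CommGroup A] {C : cocycles2 G A}
    (τ : G →* CocycleExt C) (hτ : ∀ g, (τ g).snd = g) : C.1 ∈ coboundaries2 G A := by
  refine ⟨fun g => ((τ g).fst)⁻¹, fun ⟨g, h⟩ => ?_⟩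
  have := congrArg CocycleExt.fst (map_mul τ g h)
  rw [CocycleExt.mul_def, hτ, hτ] at this
  dsimp only at this ⊢
  rw [inv_inv, this, ← mul_inv, inv_mul_cancel_left]

section ZModTwo

lemma zmodTwo_sq (a : Multiplicative (ZMod 2)) : a ^ 2 = 1 := by
  revert a; decide

lemma zmodTwo_pow_of_even (a : Multiplicative (ZMod 2)) {m : ℕ} (hm : Even m) : a ^ m = 1 := by
  obtain ⟨r, rfl⟩ := hm
  rw [← two_mul, pow_mul, zmodTwo_sq, one_pow]

lemma zmodTwo_eq_one_of_pow_odd {a : Multiplicative (ZMod 2)} {m : ℕ} (hm : ¬Even m)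
    (ha : a ^ m = 1) : a = 1 := by
  obtain ⟨r, rfl⟩ := Nat.not_even_iff_odd.mp hm
  rwa [pow_succ, pow_mul, zmodTwo_sq, one_pow, one_mul] at ha

lemma zmodTwo_inv (a : Multiplicative (ZMod 2)) : a⁻¹ = a :=
  inv_eq_of_mul_eq_one_left (by rw [← sq, zmodTwo_sq])

lemma Nat.div_add_add_mod_div (x y z : ℕ) {m : ℕ} (hm : 0 < m) :
    (x + y) / m + (z + (x + y) % m) / m = (x + y + z) / m := by
  have h := Nat.mod_add_div (x + y) m
  rw [add_comm ((x + y) / m), ← Nat.add_mul_div_left _ _ hm]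
  congr 1
  linarith

def carryCocycle (m : ℕ) [NeZero m] :
    cocycles2 (Multiplicative (ZMod m)) (Multiplicative (ZMod 2)) :=
  ⟨fun p => ofAdd (((toAdd p.1).val + (toAdd p.2).val) / m : ℕ), fun a b c => by
    simp only [toAdd_mul, ZMod.val_add, ← ofAdd_add, ← Nat.cast_add]
    rw [Nat.div_add_add_mod_div _ _ _ (NeZero.pos m), add_comm (((toAdd a).val + _) % m),
      add_comm _ (((toAdd a).val + _) / m), Nat.div_add_add_mod_div _ _ _ (NeZero.pos m),
      add_comm ((toAdd b).val + _), ← add_assoc]⟩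

lemma carryCocycle_symm (m : ℕ) [NeZero m] (a b : Multiplicative (ZMod m)) :
    (carryCocycle m).1 (a, b) = (carryCocycle m).1 (b, a) := by
  simp [carryCocycle, add_comm]

lemma powProd_carryCocycle_one (m k : ℕ) [NeZero m] : powProd (carryCocycle m).1 1 k = 1 := by
  simp [powProd, carryCocycle]

-- The carries of `t + 1` for `t < m` are all zero except for the last one.
lemma powProd_carryCocycle_ofAdd_one {m : ℕ} [NeZero m] (hm : 1 < m) :
    powProd (carryCocycle m).1 (ofAdd 1) m = ofAdd 1 := by
  have : Fact (1 < m) := ⟨hm⟩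
  have hterm : ∀ t ∈ Finset.range m, (carryCocycle m).1 (ofAdd 1 ^ t, ofAdd 1)
      = ofAdd (((t + 1) / m : ℕ) : ZMod 2) := fun t ht => by
    simp [carryCocycle, ← ofAdd_nsmul, ZMod.val_natCast_of_lt (Finset.mem_range.mp ht),
      ZMod.val_one]
  rw [powProd, Finset.prod_congr rfl hterm, ← ofAdd_sum, ← Nat.cast_sum]
  obtain ⟨k, rfl⟩ : ∃ k, m = k + 1 := ⟨m - 1, by omega⟩
  rw [Finset.sum_range_succ, Finset.sum_eq_zero fun t ht => Nat.div_eq_of_lt (by simp at ht; omega),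
    Nat.div_self k.succ_pos, zero_add, Nat.cast_one]

end ZModTwo

section Generators

variable {ι : Type*} (n : ι → ℕ)

def parityChar (i : {i // Even (n i)}) : ZModPi n →* Multiplicative (ZMod 2) :=
  (ZMod.castHom (even_iff_two_dvd.mp i.2) (ZMod 2)).toAddMonoidHom.toMultiplicative.comp
    (Pi.evalMonoidHom (fun i => Multiplicative (ZMod (n i))) i)

def bilinearAt (i j : {i // Even (n i)}) : cocycles2 (ZModPi n) (Multiplicative (ZMod 2)) :=
  ⟨_, bilinear_mem_cocycles2 (parityChar n i) (parityChar n j)⟩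

variable [∀ i, NeZero (n i)]

def carryAt (i : ι) : cocycles2 (ZModPi n) (Multiplicative (ZMod 2)) :=
  ⟨_, comp_prodMap_mem_cocycles2 (carryCocycle (n i)).2
    (Pi.evalMonoidHom (fun i => Multiplicative (ZMod (n i))) i)⟩

lemma powProd_carryAt (i : ι) (g : ZModPi n) (m : ℕ) :
    powProd (carryAt n i).1 g m = powProd (carryCocycle (n i)).1 (g i) m := by
  unfold carryAt
  exact powProd_comp_prodMap (carryCocycle (n i)).1
    (Pi.evalMonoidHom (fun i => Multiplicative (ZMod (n i))) i) g m

end Generators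

section Invariants

open ZModPi

variable {ι : Type*} [DecidableEq ι] (n : ι → ℕ)

lemma toAdd_parityChar_gen (i : {i // Even (n i)}) (l : ι) :
    toAdd (parityChar n i (gen n l)) = if l = i then 1 else 0 := by
  by_cases h : l = i
  · subst h
    simpa [parityChar, gen] using map_one (ZMod.castHom (even_iff_two_dvd.mp i.2) (ZMod 2))
  · simp [parityChar, gen, h]

def h2Invariant (i j : ι) :
    cocycles2 (ZModPi n) (Multiplicative (ZMod 2)) →* Multiplicative (ZMod 2) :=
  if i = j then powProdHom (gen n i) (n i) else commFormHom (gen n i) (gen n j)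

lemma h2Invariant_comm (i j : ι) : h2Invariant n i j = h2Invariant n j i := by
  by_cases h : i = j
  · subst h; rfl
  · ext C
    simp [h2Invariant, h, Ne.symm h, commForm_swap C.1 (gen n i), zmodTwo_inv]

def h2Invariants :
    cocycles2 (ZModPi n) (Multiplicative (ZMod 2)) →*
      (Sym2 {i // Even (n i)} → Multiplicative (ZMod 2)) :=
  MonoidHom.pi <| Sym2.lift
    ⟨fun i j : {i // Even (n i)} => h2Invariant n i j, fun i j => h2Invariant_comm n i j⟩

lemma h2Invariants_mk (C : cocycles2 (ZModPi n) (Multiplicative (ZMod 2)))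
    (i j : {i // Even (n i)}) : h2Invariants n C s(i, j) = h2Invariant n i j C :=
  rfl

lemma h2Invariants_eq_one_of_mem_coboundaries2
    {C : cocycles2 (ZModPi n) (Multiplicative (ZMod 2))}
    (hC : C.1 ∈ coboundaries2 (ZModPi n) (Multiplicative (ZMod 2))) : h2Invariants n C = 1 := by
  funext z
  induction z using Sym2.ind with | h i j => ?_
  rw [h2Invariants_mk, h2Invariant, Pi.one_apply]
  split_ifs
  · obtain ⟨a, ha⟩ := exists_powProd_eq_pow_of_mem_coboundaries2 hC (gen_pow_card n i)
    exact ha.trans (zmodTwo_pow_of_even a i.2)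
  · exact commForm_eq_one_of_mem_coboundaries2 hC (Commute.all _ _)

lemma commForm_gen_eq_one_of_h2Invariants_eq_one
    {C : cocycles2 (ZModPi n) (Multiplicative (ZMod 2))} (h : h2Invariants n C = 1) (i j : ι) :
    commForm C.1 (gen n i) (gen n j) = 1 := by
  -- A generator of odd order pairs trivially with everything, as the form takes values in `ℤ/2`.
  have hodd : ∀ i, ¬Even (n i) → ∀ b, commForm C.1 (gen n i) b = 1 := fun i hi b =>
    zmodTwo_eq_one_of_pow_odd hi <| by
      rw [← commFormHomLeft_apply C.2, ← map_pow, gen_pow_card, map_one]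
  by_cases hij : i = j
  · rw [hij, commForm, div_self']
  by_cases hi : Even (n i)
  · by_cases hj : Even (n j)
    · simpa [h2Invariants_mk, h2Invariant, hij] using
        congrFun h s(⟨i, hi⟩, ⟨j, hj⟩)
    · rw [commForm_swap, hodd j hj, inv_one]
  · exact hodd i hi _

lemma h2Invariants_bilinearAt {i j : {i // Even (n i)}} (hij : i ≠ j) :
    h2Invariants n (bilinearAt n i j) = Pi.mulSingle s(i, j) (ofAdd 1) := by
  funext z
  induction z using Sym2.ind with | h l m => ?_
  rw [h2Invariants_mk, h2Invariant, Pi.mulSingle_apply]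
  split_ifs with hlm hz hz
  · rw [Sym2.eq_iff] at hz
    rcases hz with ⟨rfl, rfl⟩ | ⟨rfl, rfl⟩
    exacts [absurd (Subtype.ext hlm) hij, absurd (Subtype.ext hlm.symm) hij]
  · rw [powProdHom_apply, powProd]
    refine Finset.prod_eq_one fun t _ => ?_
    have : ¬(l = i ∧ l = j) := fun h => hij (h.1.symm.trans h.2)
    simp [bilinearAt, toAdd_parityChar_gen, Subtype.coe_inj]
    tauto
  · rw [Sym2.eq_iff] at hz
    rcases hz with ⟨rfl, rfl⟩ | ⟨rfl, rfl⟩ <;>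
      simp [bilinearAt, commForm, toAdd_parityChar_gen, Subtype.coe_inj, hij, Ne.symm hij,
        zmodTwo_inv]
  · rw [Sym2.eq_iff] at hz
    simp only [commFormHom_apply, bilinearAt, commForm, toAdd_parityChar_gen, Subtype.coe_inj]
    split_ifs <;> simp_all

variable [∀ i, NeZero (n i)]

lemma h2Invariants_carryAt (i : {i // Even (n i)}) :
    h2Invariants n (carryAt n i) = Pi.mulSingle s(i, i) (ofAdd 1) := by
  have hi : 1 < n i := by
    obtain ⟨r, hr⟩ := i.2
    have := NeZero.ne (n i)
    omega
  funext z
  induction z using Sym2.ind with | h j l => ?_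
  rw [h2Invariants_mk, h2Invariant, Pi.mulSingle_apply]
  split_ifs with hjl hz hz
  · obtain ⟨rfl, rfl⟩ : j = i ∧ l = i := by simpa [Sym2.eq_iff] using hz
    simp [powProd_carryAt, gen, powProd_carryCocycle_ofAdd_one hi]
  · have hji : (j : ι) ≠ i := fun h => hz <| by rw [Subtype.ext h, Subtype.ext (hjl.symm.trans h)]
    simp [powProd_carryAt, gen_apply_of_ne n (Ne.symm hji), powProd_carryCocycle_one]
  · simp_all
  · simp [carryAt, commForm, carryCocycle_symm]

variable [Fintype ι]

lemma symm_of_commForm_gen_eq_one {A : Type*} [CommGroup A] {C : ZModPi n × ZModPi n → A}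
    (hC : C ∈ cocycles2 (ZModPi n) A) (h : ∀ i j, commForm C (gen n i) (gen n j) = 1)
    (a b : ZModPi n) : C (a, b) = C (b, a) := by
  have hgen : ∀ j, commFormHomLeft hC (gen n j) = 1 := fun j => hom_ext fun i => h i j
  have hall : ∀ b, commFormHomLeft hC b = 1 := fun b => hom_ext fun i => by
    show commForm C (gen n i) b = 1
    rw [commForm_swap, inv_eq_one]
    exact DFunLike.congr_fun (hgen i) b
  exact div_eq_one.mp (DFunLike.congr_fun (hall b) a)

lemma mem_coboundaries2_of_symm (C : cocycles2 (ZModPi n) (Multiplicative (ZMod 2)))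
    (hsymm : ∀ a b, C.1 (a, b) = C.1 (b, a))
    (hpow : ∀ i, Even (n i) → powProd C.1 (gen n i) (n i) = 1) :
    C.1 ∈ coboundaries2 (ZModPi n) (Multiplicative (ZMod 2)) := by
  let z : ι → CocycleExt C := fun i => ⟨1, gen n i⟩
  have hz : ∀ i, (z i ^ n i).snd = 1 := fun i => by simp [z, CocycleExt.mk_one_pow, gen_pow_card]
  -- `w i` still lifts `gen n i` and has order dividing `n i`: for odd `n i` because
  -- `z i ^ n i` lies in the kernel `ℤ/2` and `n i + 1` is even.
  let w : ι → CocycleExt C := fun i => z i ^ (n i + 1)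
  have hw : ∀ i, w i ^ n i = 1 := fun i => by
    rw [← pow_mul, mul_comm, pow_mul]
    by_cases hi : Even (n i)
    · have : z i ^ n i = 1 := by
        simp [z, CocycleExt.mk_one_pow, gen_pow_card, hpow i hi, CocycleExt.one_def]
      rw [this, one_pow]
    · obtain ⟨r, hr⟩ := (Nat.not_even_iff_odd.mp hi).add_one
      rw [hr, ← two_mul, pow_mul, CocycleExt.sq_eq_one_of_snd_eq_one zmodTwo_sq (hz i), one_pow]
  have hcomm : Pairwise fun i j => Commute (w i) (w j) := fun i j _ =>
    (CocycleExt.commute_mk_one hsymm (Commute.all _ _)).pow_pow _ _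
  refine mem_coboundaries2_of_section (lift w hw hcomm) fun g => DFunLike.congr_fun
    (show CocycleExt.sndHom.comp (lift w hw hcomm) = MonoidHom.id _ from hom_ext fun i => ?_) g
  simp [CocycleExt.sndHom, w, z, CocycleExt.mk_one_pow, pow_succ, gen_pow_card, CocycleExt.mul_def]

lemma mem_coboundaries2_of_h2Invariants_eq_one
    {C : cocycles2 (ZModPi n) (Multiplicative (ZMod 2))} (h : h2Invariants n C = 1) :
    C.1 ∈ coboundaries2 (ZModPi n) (Multiplicative (ZMod 2)) :=
  mem_coboundaries2_of_symm n C
    (symm_of_commForm_gen_eq_one n C.2 (commForm_gen_eq_one_of_h2Invariants_eq_one n h))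
    fun i hi => by simpa [h2Invariants_mk, h2Invariant] using congrFun h s(⟨i, hi⟩, ⟨i, hi⟩)

lemma ker_h2Invariants :
    (h2Invariants n).ker = (coboundaries2 (ZModPi n) (Multiplicative (ZMod 2))).subgroupOf
      (cocycles2 (ZModPi n) (Multiplicative (ZMod 2))) := by
  ext C
  rw [MonoidHom.mem_ker, Subgroup.mem_subgroupOf]
  exact ⟨mem_coboundaries2_of_h2Invariants_eq_one n, h2Invariants_eq_one_of_mem_coboundaries2 n⟩

lemma h2Invariants_surjective : Function.Surjective (h2Invariants n) := by
  have hgen : ∀ z : Sym2 {i // Even (n i)},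
      Pi.mulSingle z (ofAdd (1 : ZMod 2)) ∈ (h2Invariants n).range := by
    refine Sym2.ind fun i j => ?_
    by_cases hij : i = j
    · subst hij
      exact ⟨carryAt n i, h2Invariants_carryAt n i⟩
    · exact ⟨bilinearAt n i j, h2Invariants_bilinearAt n hij⟩
  intro f
  rw [← MonoidHom.mem_range, ← Finset.univ_prod_mulSingle f]
  refine Subgroup.prod_mem _ fun z _ => ?_
  rw [← ofAdd_one_pow_val (f z), Pi.mulSingle_pow]
  exact Subgroup.pow_mem _ (hgen z) _

noncomputable def h2ZModPiEquiv :
    H2triv (ZModPi n) (Multiplicative (ZMod 2)) ≃*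
      (Sym2 {i // Even (n i)} → Multiplicative (ZMod 2)) :=
  (QuotientGroup.quotientMulEquivOfEq (ker_h2Invariants n).symm).trans
    (QuotientGroup.quotientKerEquivOfSurjective _ (h2Invariants_surjective n))

end Invariants

/-- for `G = ℤ/n₁ × ⋯ × ℤ/n_k` with exactly `s` of the `nᵢ` even, acting
trivially on `ℝ*`, `H²(G, ℝ*) ≅ (ℤ/2)^{s(s+1)/2}`; in particular
`|H²(G, ℝ*)| = 2^{s(s+1)/2}`. -/
theorem stmt7 (k : ℕ) (n : Fin k → ℕ) (hpos : ∀ i, 0 < n i) (s : ℕ)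
    (hs : (Finset.univ.filter fun i => Even (n i)).card = s) :
    Nonempty (H2triv (∀ i, Multiplicative (ZMod (n i))) ℝˣ ≃*
      (Fin (s * (s + 1) / 2) → Multiplicative (ZMod 2))) ∧
    Nat.card (H2triv (∀ i, Multiplicative (ZMod (n i))) ℝˣ) = 2 ^ (s * (s + 1) / 2) := by
  have : ∀ i, NeZero (n i) := fun i => ⟨(hpos i).ne'⟩
  have hcard : Fintype.card (Sym2 {i // Even (n i)}) = s * (s + 1) / 2 := by
    rw [Sym2.card, Fintype.card_subtype, hs, Nat.choose_two_right, Nat.add_sub_cancel, mul_comm]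
  let e := (h2UnitsRealEquiv (ZModPi n)).trans <| (h2ZModPiEquiv n).trans <|
    MulEquiv.arrowCongr (Fintype.equivFinOfCardEq hcard) (MulEquiv.refl _)
  refine ⟨⟨e⟩, ?_⟩
  rw [Nat.card_congr e.toEquiv, Nat.card_fun, Nat.card_eq_fintype_card, Nat.card_eq_fintype_card,
    Fintype.card_fin, Fintype.card_multiplicative, ZMod.card]
end

section
/- Let W be a (1,2)-symmetric Z/m × Z/n-graded twisted C-algebra with standard basis and structure constant C, with generators a of Z/m and b of Z/n. Then C(a,b)^{mn} = 1. -/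
/-!
Comparing the `(1,2)`-symmetry relation at `(a, b, z)` with `ab = ba` shows that moving from
`z` to `bz` multiplies `C(a, ·)` by `q = C(a,b)/C(b,a)` up to the change of `C(b, ·)` along `a`.
Along a column `aⁱ bˢ` the latter vanishes, so `C(a, aⁱ bˢ) = qˢ`; wrapping around at
`s = n - 1` then gives `C(b, aⁱ b^{n-1}) = q^n C(b, a^{i+1} b^{n-1})`, and going once around
`ℤ/m` yields `q^{mn} = 1`. For standard bases `C(b, a) = 1`, so `q = C(a, b)`.
-/

/-- `(1,2)`-symmetry of the associator: `r(a,b,c) = r(b,a,c)` for all `a,b,c`. -/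
def Sym12 {G : Type*} [CommGroup G] (C : G → G → ℂˣ) : Prop :=
  ∀ a b c : G,
    C b c * (C (a * b) c)⁻¹ * C a (b * c) * (C a b)⁻¹ =
      C a c * (C (b * a) c)⁻¹ * C b (a * c) * (C b a)⁻¹

namespace Sym12

variable {G : Type*} [CommGroup G] {C : G → G → ℂˣ}

theorem apply_mul_right (hsym : Sym12 C) (x y z : G) :
    C x (y * z) = C x z * C y (x * z) / C y z * (C x y / C y x) := by
  have h := congrArg Units.val (hsym x y z)
  rw [mul_comm y x] at h
  ext
  push_cast at h ⊢
  field_simp at h ⊢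
  linear_combination h

variable {x y : G}

theorem apply_pow_mul_pow_eq_div_pow (hsym : Sym12 C) {k : ℕ} (hcol : ∀ i : ℕ, C x (x ^ i) = 1)
    (hrow : ∀ i s : ℕ, s < k → C y (x ^ i * y ^ s) = 1) (i : ℕ) {s : ℕ} (hs : s ≤ k) :
    C x (x ^ i * y ^ s) = (C x y / C y x) ^ s := by
  induction s with
  | zero => simpa using hcol i
  | succ s ih =>
    rw [pow_succ', mul_left_comm, hsym.apply_mul_right, ← mul_assoc, ← pow_succ',
      hrow i s hs, hrow (i + 1) s hs, ih (by omega), pow_succ]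
    simp

theorem apply_pow_eq_div_pow_mul (hsym : Sym12 C) {n : ℕ} (hy : y ^ (n + 1) = 1)
    (hcol : ∀ i : ℕ, C x (x ^ i) = 1) (hrow : ∀ i s : ℕ, s < n → C y (x ^ i * y ^ s) = 1)
    (i : ℕ) : C y (y ^ n) = (C x y / C y x) ^ ((n + 1) * i) * C y (x ^ i * y ^ n) := by
  induction i with
  | zero => simp
  | succ i ih =>
    have key := hsym.apply_mul_right x y (x ^ i * y ^ n)
    rw [mul_left_comm, ← pow_succ', hy, mul_one, hcol, ← mul_assoc, ← pow_succ',
      hsym.apply_pow_mul_pow_eq_div_pow hcol hrow i le_rfl,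
      eq_comm, div_mul_eq_mul_div, div_eq_one] at key
    rw [ih, ← key, mul_right_comm _ _ (C x y / C y x), ← pow_succ, ← mul_assoc, ← pow_add,
      ← Nat.mul_succ]

theorem div_pow_eq_one (hsym : Sym12 C) {m n : ℕ} (hx : x ^ m = 1) (hy : y ^ n = 1)
    (hcol : ∀ i : ℕ, C x (x ^ i) = 1) (hrow : ∀ i s : ℕ, s < n - 1 → C y (x ^ i * y ^ s) = 1) :
    (C x y / C y x) ^ (m * n) = 1 := by
  cases n with
  | zero => simp
  | succ n =>
    have h := hsym.apply_pow_eq_div_pow_mul hy hcol hrow m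
    rwa [hx, one_mul, right_eq_mul, mul_comm] at h

end Sym12

theorem ZMod.ofAdd_one_pow_self (n : ℕ) : Multiplicative.ofAdd (1 : ZMod n) ^ n = 1 := by
  rw [← ofAdd_nsmul, nsmul_one, ZMod.natCast_self, ofAdd_zero]

theorem stmt16_general (m n : ℕ)
    (C : (Multiplicative (ZMod m) × Multiplicative (ZMod n)) →
         (Multiplicative (ZMod m) × Multiplicative (ZMod n)) → ℂˣ)
    (a : Multiplicative (ZMod m) × Multiplicative (ZMod n))
    (b : Multiplicative (ZMod m) × Multiplicative (ZMod n))
    (ha : a = (Multiplicative.ofAdd (1 : ZMod m), 1))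
    (hb : b = (1, Multiplicative.ofAdd (1 : ZMod n)))
    (hsym : Sym12 C)
    (hunit : ∀ x, C 1 x = 1 ∧ C x 1 = 1)
    (hcol : ∀ i : ℕ, C a (a ^ i) = 1)
    (hrow : ∀ i s : ℕ, s < n - 1 → C b (a ^ i * b ^ s) = 1) :
    C a b ^ (m * n) = 1 := by
  rcases lt_or_ge n 2 with hn | hn
  · interval_cases n
    · simp
    · rw [hb, Subsingleton.elim (Multiplicative.ofAdd (1 : ZMod 1)) 1, Prod.mk_one_one, (hunit a).2,
        one_pow]
  have ham : a ^ m = 1 := by simp [ha, ZMod.ofAdd_one_pow_self]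
  have hbn : b ^ n = 1 := by simp [hb, ZMod.ofAdd_one_pow_self]
  have hba : C b a = 1 := by simpa using hrow 1 0 (by omega)
  simpa [hba] using hsym.div_pow_eq_one ham hbn hcol hrow

/-- let `W` be a `(1,2)`-symmetric `ℤ/m × ℤ/n`-graded twisted ℂ-algebra
with structure constant `C` relative to a standard basis, where `a`, `b` are the chosen
generators of `ℤ/m`, `ℤ/n`. Standardness means: `C(1,x) = C(x,1) = 1`; the first column
is a standard cyclic basis, i.e. `C(a, aⁱ) = 1` for all `i`; the rows are generated by
`b`, i.e. `C(b, aⁱ bˢ) = 1` for `s = 0, …, n-2`; and the first row is a standard cyclic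
basis, i.e. also `C(b, b^{n-1}) = 1`.  Then `C(a,b)^{mn} = 1`. -/
theorem stmt16 (m n : ℕ) (hm : 0 < m) (hn : 0 < n)
    (C : (Multiplicative (ZMod m) × Multiplicative (ZMod n)) →
         (Multiplicative (ZMod m) × Multiplicative (ZMod n)) → ℂˣ)
    (a : Multiplicative (ZMod m) × Multiplicative (ZMod n))
    (b : Multiplicative (ZMod m) × Multiplicative (ZMod n))
    (ha : a = (Multiplicative.ofAdd (1 : ZMod m), 1))
    (hb : b = (1, Multiplicative.ofAdd (1 : ZMod n)))
    (hsym : Sym12 C)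
    (hunit : ∀ x, C 1 x = 1 ∧ C x 1 = 1)
    (hcol : ∀ i : ℕ, C a (a ^ i) = 1)
    (hrow : ∀ i s : ℕ, s < n - 1 → C b (a ^ i * b ^ s) = 1)
    (hwrap : C b (b ^ (n - 1)) = 1) :
    C a b ^ (m * n) = 1 :=
  stmt16_general m n C a b ha hb hsym hunit hcol hrow
end

section
/- Two (1,2)-symmetric G-graded twisted C-algebras W1, W2 (G a finite abelian group) with standard bases B1, B2 and structure constants C1, C2 : G×G → A ⊂ C* are graded-isomorphic if and only if C1 = C2. -/
/-- Twisted multiplication on `G →₀ K` (the `K`-vector space with graded basis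
`w_g = single g 1`) determined by the structure constant `C`. -/
noncomputable def twistedMul {G K : Type*} [Group G] [Field K] (C : G → G → Kˣ)
    (f g : G →₀ K) : G →₀ K :=
  f.sum fun a ca => g.sum fun b cb => Finsupp.single (a * b) (ca * cb * (C a b : K))

/-- `φ` is a graded isomorphism between the `G`-graded twisted `K`-algebras with
structure constants `C1`, `C2`: a linear bijection that is multiplicative, unitarian
(the unit being `C(e,e)⁻¹ w_e`) and preserves each graded component. -/
def IsGradedIso {G K : Type*} [Group G] [Field K] (C1 C2 : G → G → Kˣ)
    (φ : (G →₀ K) ≃ₗ[K] (G →₀ K)) : Prop :=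
  (∀ f g : G →₀ K, φ (twistedMul C1 f g) = twistedMul C2 (φ f) (φ g)) ∧
  φ (Finsupp.single 1 (((C1 1 1)⁻¹ : Kˣ) : K)) =
    Finsupp.single 1 (((C2 1 1)⁻¹ : Kˣ) : K) ∧
  ∀ (g : G) (x : K), ∃ c : K, φ (Finsupp.single g x) = Finsupp.single g c

/-- The chosen generator of the `t`-th cyclic factor of `ℤ/n₁ × ⋯ × ℤ/n_k`. -/
def agen {k : ℕ} (n : Fin k → ℕ) (t : Fin k) : ∀ i, Multiplicative (ZMod (n i)) :=
  Pi.mulSingle t (Multiplicative.ofAdd (1 : ZMod (n t)))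

/-- `C` is the structure constant relative to a standard basis, defined recursively over
the decomposition `G = ℤ/n₁ × ⋯ × ℤ/n_k` with chosen generators `a_t`: the basis
contains `1` (so `C(1,·) = C(·,1) = 1`), the basis elements indexed by the subgroup
generated by `a_1, …, a_{t-1}` times a power `a_t^{s+1}` are obtained by multiplying by
`a_t` (so `C(a_t, g · a_tˢ) = 1` for `s = 0, …, n_t - 2`), and the cyclic standard basis
of the `t`-th factor wraps around to `1` (so `C(a_t, a_t^{n_t - 1}) = 1`). -/
def IsStandard {k : ℕ} (n : Fin k → ℕ)
    (C : (∀ i, Multiplicative (ZMod (n i))) → (∀ i, Multiplicative (ZMod (n i))) → ℂˣ) :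
    Prop :=
  (∀ x, C 1 x = 1 ∧ C x 1 = 1) ∧
  (∀ t : Fin k, C (agen n t) (agen n t ^ (n t - 1)) = 1) ∧
  (∀ t : Fin k, ∀ g : ∀ i, Multiplicative (ZMod (n i)), (∀ j, t ≤ j → g j = 1) →
    ∀ s : ℕ, s < n t - 1 → C (agen n t) (g * agen n t ^ s) = 1)

lemma twistedMul_single {G K : Type*} [Group G] [Field K] (C : G → G → Kˣ)
    (a b : G) (x y : K) :
    twistedMul C (Finsupp.single a x) (Finsupp.single b y)
      = Finsupp.single (a * b) (x * y * (C a b : K)) := by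
  unfold twistedMul
  rw [Finsupp.sum_single_index, Finsupp.sum_single_index]
  · simp
  · simp

lemma pow_val_add' {m : ℕ} [NeZero m] {μ : ℂ} (h : μ ^ m = 1) (x y : ZMod m) :
    μ ^ (x + y).val = μ ^ x.val * μ ^ y.val := by
  rw [ZMod.val_add, ← pow_add]
  conv_rhs => rw [← Nat.div_add_mod (x.val + y.val) m]
  rw [pow_add, pow_mul, h, one_pow, one_mul]

lemma agen_pow_self {k : ℕ} (n : Fin k → ℕ) (t : Fin k) :
    agen n t ^ (n t) = 1 := by
  funext j
  by_cases hj : j = t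
  · subst hj
    simp only [Pi.pow_apply, Pi.one_apply, agen, Pi.mulSingle_eq_same]
    rw [← ofAdd_nsmul]
    simp
  · simp [agen, Pi.mulSingle_eq_of_ne hj, Pi.pow_apply]

/-- two `(1,2)`-symmetric `G`-graded twisted ℂ-algebras (`G` a finite
abelian group, `G = ℤ/n₁ × ⋯ × ℤ/n_k`) whose structure constants `C1`, `C2` relative to
standard bases take values in a finite subgroup `A ⊆ ℂ*` are graded-isomorphic iff
`C1 = C2`. -/
theorem stmt17 (k : ℕ) (n : Fin k → ℕ) (hpos : ∀ i, 0 < n i) (A : Subgroup ℂˣ)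
    [Finite A]
    (C1 C2 : (∀ i, Multiplicative (ZMod (n i))) → (∀ i, Multiplicative (ZMod (n i))) → ℂˣ)
    (h1std : IsStandard n C1) (h2std : IsStandard n C2)
    (h1sym : Sym12 C1) (h2sym : Sym12 C2)
    (h1A : ∀ x y, C1 x y ∈ A) (h2A : ∀ x y, C2 x y ∈ A) :
    (∃ φ : ((∀ i, Multiplicative (ZMod (n i))) →₀ ℂ) ≃ₗ[ℂ]
        ((∀ i, Multiplicative (ZMod (n i))) →₀ ℂ), IsGradedIso C1 C2 φ) ↔ C1 = C2 := by
  haveI : ∀ i, NeZero (n i) := fun i => ⟨(hpos i).ne'⟩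
  constructor
  · rintro ⟨φ, hmul, hunit, hgr⟩
    choose lam hlam using fun g => hgr g 1
    have hne : ∀ g, lam g ≠ 0 := by
      intro g hg
      have h0 : φ (Finsupp.single g (1 : ℂ)) = 0 := by
        rw [hlam, hg, Finsupp.single_zero]
      have := φ.injective (h0.trans (map_zero φ).symm)
      exact one_ne_zero (Finsupp.single_eq_zero.mp this)
    have hφ : ∀ g (x : ℂ), φ (Finsupp.single g x) = Finsupp.single g (x * lam g) := by
      intro g x
      have h1 : Finsupp.single g x = x • Finsupp.single g (1 : ℂ) := by
        rw [Finsupp.smul_single', mul_one]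
      rw [h1, map_smul, hlam, Finsupp.smul_single']
    have key : ∀ a b, (C1 a b : ℂ) * lam (a * b) = lam a * lam b * (C2 a b : ℂ) := by
      intro a b
      have h1 := hmul (Finsupp.single a (1:ℂ)) (Finsupp.single b (1:ℂ))
      rw [twistedMul_single, hφ, hlam, hlam, twistedMul_single] at h1
      have h2 := congrArg (fun f => f (a * b)) h1
      simpa using h2
    have hone : lam 1 = 1 := by
      have h11 : C1 1 1 = 1 := (h1std.1 1).1
      have h22 : C2 1 1 = 1 := (h2std.1 1).1
      rw [h11, h22] at hunit
      simp only [inv_one, Units.val_one] at hunit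
      rw [hφ, one_mul] at hunit
      have := congrArg (fun f => f (1 : ∀ i, Multiplicative (ZMod (n i)))) hunit
      simpa using this
    have hstep : ∀ t : Fin k, ∀ g : (∀ i, Multiplicative (ZMod (n i))),
        (∀ j, t ≤ j → g j = 1) → ∀ s : ℕ, s < n t - 1 →
        lam (agen n t) * lam (g * agen n t ^ s) = lam (g * agen n t ^ (s + 1)) := by
      intro t g hg s hs
      have k1 := h1std.2.2 t g hg s hs
      have k2 := h2std.2.2 t g hg s hs
      have hk := key (agen n t) (g * agen n t ^ s)
      rw [k1, k2] at hk
      simp only [Units.val_one, one_mul, mul_one] at hk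
      have harr : agen n t * (g * agen n t ^ s) = g * agen n t ^ (s + 1) := by
        rw [mul_comm (agen n t) (g * agen n t ^ s), mul_assoc, ← pow_succ]
      rw [harr] at hk
      exact hk.symm
    have hiter : ∀ t : Fin k, ∀ g : (∀ i, Multiplicative (ZMod (n i))),
        (∀ j, t ≤ j → g j = 1) → ∀ s : ℕ, s < n t →
        lam (g * agen n t ^ s) = lam (agen n t) ^ s * lam g := by
      intro t g hg s
      induction s with
      | zero => intro _; simp
      | succ s ih =>
        intro hs
        have hs' : s < n t - 1 := by omega
        rw [← hstep t g hg s hs', ih (by omega), pow_succ]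
        ring
    have hroot : ∀ t : Fin k, lam (agen n t) ^ (n t) = 1 := by
      intro t
      have k1 := h1std.2.1 t
      have k2 := h2std.2.1 t
      have hk := key (agen n t) (agen n t ^ (n t - 1))
      rw [k1, k2] at hk
      simp only [Units.val_one, one_mul, mul_one] at hk
      have hord : agen n t * agen n t ^ (n t - 1) = 1 := by
        rw [← pow_succ']
        have h1 : n t - 1 + 1 = n t := by have := hpos t; omega
        rw [h1]
        exact agen_pow_self n t
      have h2 : lam (agen n t ^ (n t - 1)) = lam (agen n t) ^ (n t - 1) * lam 1 := by
        have := hiter t 1 (fun j _ => rfl) (n t - 1) (by have := hpos t; omega)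
        rwa [one_mul] at this
      rw [hord, hone, h2, hone, mul_one] at hk
      have h3 : n t - 1 + 1 = n t := by have := hpos t; omega
      rw [← h3, pow_succ]
      linear_combination -hk
    have haux : ∀ m : ℕ, ∀ g : (∀ i, Multiplicative (ZMod (n i))),
        (∀ j : Fin k, m ≤ (j : ℕ) → g j = 1) →
        lam g = ∏ t : Fin k, lam (agen n t) ^ (Multiplicative.toAdd (g t)).val := by
      intro m
      induction m with
      | zero =>
        intro g hg
        have hg1 : g = 1 := funext fun j => hg j (Nat.zero_le _)
        subst hg1
        simp [hone]
      | succ m ih =>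
        intro g hg
        by_cases hmk : m < k
        · set t : Fin k := ⟨m, hmk⟩ with ht
          have htval : (t : ℕ) = m := rfl
          set s : ℕ := (Multiplicative.toAdd (g t)).val with hsdef
          have hslt : s < n t := ZMod.val_lt _
          set g' := Function.update g t 1 with hg'
          have hg'cond : ∀ j : Fin k, m ≤ (j : ℕ) → g' j = 1 := by
            intro j hj
            by_cases hjt : j = t
            · subst hjt; simp [hg']
            · have hj' : m + 1 ≤ (j : ℕ) := by
                rcases Nat.lt_or_ge m (j : ℕ) with h | h
                · omega
                · exact absurd (Fin.ext (by omega : (j : ℕ) = (t : ℕ))) hjt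
              rw [hg', Function.update_of_ne hjt]
              exact hg j hj'
          have hdec : g = g' * agen n t ^ s := by
            funext j
            rcases eq_or_ne j t with hjt | hjt
            · subst hjt
              have hco : (g' * agen n t ^ s) t
                  = Multiplicative.ofAdd ((s : ZMod (n t))) := by
                rw [Pi.mul_apply, hg', Function.update_self, one_mul, Pi.pow_apply]
                rw [agen, Pi.mulSingle_eq_same, ← ofAdd_nsmul]
                simp
              rw [hco, hsdef, ZMod.natCast_val, ZMod.cast_id, ofAdd_toAdd]
            · have hco : (g' * agen n t ^ s) j = g j * 1 := by
                rw [Pi.mul_apply, hg', Function.update_of_ne hjt, Pi.pow_apply]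
                rw [agen, Pi.mulSingle_eq_of_ne hjt, one_pow]
              rw [hco, mul_one]
          have hcond' : ∀ j, t ≤ j → g' j = 1 := by
            intro j hj
            have := Fin.le_def.mp hj
            exact hg'cond j (by omega)
          have h1 : lam g = lam (agen n t) ^ s * lam g' := by
            rw [hdec]
            rw [← hdec]
            nth_rewrite 1 [hdec]
            exact hiter t g' hcond' s hslt
          rw [h1, ih g' hg'cond]
          have hft : ∀ j : Fin k, lam (agen n j) ^ (Multiplicative.toAdd (g' j)).val
              = Function.update
                  (fun j : Fin k => lam (agen n j) ^ (Multiplicative.toAdd (g j)).val) t 1 j := by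
            intro j
            rcases eq_or_ne j t with hjt | hjt
            · subst hjt; simp [hg']
            · rw [Function.update_of_ne hjt, hg', Function.update_of_ne hjt]
          rw [Finset.prod_congr rfl (fun j _ => hft j),
            Finset.prod_update_of_mem (Finset.mem_univ t), one_mul,
            ← Finset.mul_prod_erase Finset.univ _ (Finset.mem_univ t),
            Finset.sdiff_singleton_eq_erase, ← hsdef]
        · refine ih g fun j hj => absurd hj ?_
          have := j.isLt
          omega
    have hF : ∀ g : (∀ i, Multiplicative (ZMod (n i))),
        lam g = ∏ t : Fin k, lam (agen n t) ^ (Multiplicative.toAdd (g t)).val :=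
      fun g => haux k g (fun j hj => absurd hj (by simpa using j.isLt.not_ge))
    have hhom : ∀ x y : (∀ i, Multiplicative (ZMod (n i))),
        lam (x * y) = lam x * lam y := by
      intro x y
      rw [hF (x * y), hF x, hF y, ← Finset.prod_mul_distrib]
      refine Finset.prod_congr rfl fun t _ => ?_
      have hxy : Multiplicative.toAdd ((x * y) t)
          = Multiplicative.toAdd (x t) + Multiplicative.toAdd (y t) := rfl
      rw [hxy]
      exact pow_val_add' (hroot t) _ _
    funext x y
    have hk := key x y
    rw [hhom x y] at hk
    have hxy : lam x * lam y ≠ 0 := mul_ne_zero (hne x) (hne y)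
    have hC : (C1 x y : ℂ) * (lam x * lam y) = (C2 x y : ℂ) * (lam x * lam y) := by
      linear_combination hk
    exact Units.ext (mul_right_cancel₀ hxy hC)
  · rintro rfl
    exact ⟨LinearEquiv.refl ℂ _, fun f g => rfl, rfl, fun g x => ⟨x, rfl⟩⟩
end
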